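/- Let a graph G with average degree a (i.e. a = 2·|E(G)|/|V(G)|) be r-locally edge coloured. Then some colour class contains at least a²/(2r²) edges. -/

import Mathlib

open SimpleGraph Set

variable {V : Type*}

/-- The spanning subgraph of `G` consisting of the edges of colour `x`. -/
def colourGraph (G : SimpleGraph V) (c : Sym2 V → ℕ) (x : ℕ) : SimpleGraph V where
  Adj u v := G.Adj u v ∧ c s(u, v) = x
  symm := ⟨fun u v h => ⟨h.1.symm, by rw [Sym2.eq_swap]; exact h.2⟩⟩
  loopless := ⟨fun u h => G.loopless.irrefl u h.1⟩

/-- An edge colouring is `r`-local if every vertex is incident with edges of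
at most `r` distinct colours. -/
def LocalColouring (G : SimpleGraph V) (c : Sym2 V → ℕ) (r : ℕ) : Prop :=
  ∀ v : V, {x : ℕ | ∃ w, G.Adj v w ∧ c s(v, w) = x}.ncard ≤ r

/-- `S` is the vertex set of a monochromatic cycle (a single vertex and a
single edge each count as a cycle). -/
def IsMonoCycle (G : SimpleGraph V) (c : Sym2 V → ℕ) (S : Set V) : Prop :=
  (∃ v, S = {v}) ∨
  (∃ u v, G.Adj u v ∧ S = {u, v}) ∨
  (∃ (v : V) (p : G.Walk v v), p.IsCycle ∧ S = {x | x ∈ p.support} ∧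
    ∃ k, ∀ e ∈ p.edges, c e = k)

/-- `S` is the vertex set of a monochromatic path (a single vertex and a
single edge each count as a path). -/
def IsMonoPath (G : SimpleGraph V) (c : Sym2 V → ℕ) (S : Set V) : Prop :=
  ∃ (u v : V) (p : G.Walk u v), p.IsPath ∧ S = {x | x ∈ p.support} ∧
    ∃ k, ∀ e ∈ p.edges, c e = k

/-- `M` (a set of edges) is a monochromatic connected matching of colour `x` in `G`:
all edges have colour `x`, they are pairwise vertex-disjoint, and they all lie in one
connected component of the subgraph formed by the edges of colour `x`. -/
def IsMonoConnMatching (G : SimpleGraph V) (c : Sym2 V → ℕ) (x : ℕ)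
    (M : Set (Sym2 V)) : Prop :=
  (∀ e ∈ M, e ∈ G.edgeSet ∧ c e = x) ∧
  (∀ e ∈ M, ∀ f ∈ M, e ≠ f → ∀ v, v ∈ e → v ∉ f) ∧
  (∀ e ∈ M, ∀ f ∈ M, ∀ u v : V, u ∈ e → v ∈ f → (colourGraph G c x).Reachable u v)

/-- The set of vertices covered by a matching (given by its edge set). -/
def matchSupp (M : Set (Sym2 V)) : Set V := {v | ∃ e ∈ M, v ∈ e}

/-- A vertex `v` sees colour `x`, i.e. is incident with an edge of colour `x`. -/
def Sees (G : SimpleGraph V) (c : Sym2 V → ℕ) (v : V) (x : ℕ) : Prop :=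
  ∃ w, G.Adj v w ∧ c s(v, w) = x


section Aux
open Finset
set_option linter.unusedSectionVars false

def colourGraph' (G : SimpleGraph V) (c : Sym2 V → ℕ) (x : ℕ) : SimpleGraph V where
  Adj u v := G.Adj u v ∧ c s(u, v) = x
  symm := ⟨fun u v h => ⟨h.1.symm, by rw [Sym2.eq_swap]; exact h.2⟩⟩
  loopless := ⟨fun u h => G.loopless.irrefl u h.1⟩

instance (G : SimpleGraph V) [DecidableRel G.Adj] (c : Sym2 V → ℕ) (x : ℕ) :
    DecidableRel (colourGraph' G c x).Adj := fun _ _ => instDecidableAnd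

section
variable [Fintype V] [DecidableEq V] (G : SimpleGraph V) [DecidableRel G.Adj]
  (c : Sym2 V → ℕ) (x : ℕ)

lemma colour_edgeFinset :
    (colourGraph' G c x).edgeFinset = G.edgeFinset.filter (fun e => c e = x) := by
  ext e
  induction e with
  | _ u v => rw [mem_edgeFinset]; simp [mem_edgeFinset, colourGraph', mem_edgeSet]

noncomputable def seenBy (v : V) : Finset ℕ := (G.neighborFinset v).image (fun w => c s(v, w))

noncomputable def seers : Finset V := Finset.univ.filter (fun u => x ∈ seenBy G c u)

lemma colour_neighbor_subset (v : V) :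
    (colourGraph' G c x).neighborFinset v ⊆ seers G c x := by
  intro w hw
  rw [mem_neighborFinset] at hw
  simp only [seers, Finset.mem_filter, Finset.mem_univ, true_and, seenBy, Finset.mem_image]
  exact ⟨v, by rw [mem_neighborFinset]; exact hw.1.symm, by rw [Sym2.eq_swap]; exact hw.2⟩

lemma colour_degree_zero (v : V) (hv : v ∉ seers G c x) :
    (colourGraph' G c x).degree v = 0 := by
  rw [← card_neighborFinset_eq_degree, Finset.card_eq_zero,
    Finset.eq_empty_iff_forall_notMem]
  intro w hw
  rw [mem_neighborFinset] at hw
  apply hv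
  simp only [seers, Finset.mem_filter, Finset.mem_univ, true_and, seenBy, Finset.mem_image]
  exact ⟨w, by rw [mem_neighborFinset]; exact hw.1, hw.2⟩

lemma colour_class_sq_bound :
    2 * (G.edgeFinset.filter (fun e => c e = x)).card ≤ (seers G c x).card ^ 2 := by
  rw [← colour_edgeFinset, ← sum_degrees_eq_twice_card_edges]
  rw [← Finset.sum_subset (Finset.subset_univ (seers G c x))
    (fun v _ hv => colour_degree_zero G c x v hv)]
  calc ∑ v ∈ seers G c x, (colourGraph' G c x).degree v
      ≤ ∑ _v ∈ seers G c x, (seers G c x).card :=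
        Finset.sum_le_sum fun v _ => by
          rw [← card_neighborFinset_eq_degree]
          exact Finset.card_le_card (colour_neighbor_subset G c x v)
    _ = (seers G c x).card ^ 2 := by rw [Finset.sum_const, smul_eq_mul, sq]

lemma seers_sum_bound (r : ℕ) (hc : ∀ v, (seenBy G c v).card ≤ r) (colours : Finset ℕ) :
    ∑ y ∈ colours, (seers G c y).card ≤ r * Fintype.card V := by
  have : ∑ y ∈ colours, (seers G c y).card
      = ∑ v : V, (colours.filter (fun y => y ∈ seenBy G c v)).card := by
    simp only [seers, Finset.card_filter]
    rw [Finset.sum_comm]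
  rw [this]
  calc ∑ v : V, (colours.filter (fun y => y ∈ seenBy G c v)).card
      ≤ ∑ _v : V, r := Finset.sum_le_sum fun v _ =>
        le_trans (Finset.card_le_card fun y hy => (Finset.mem_filter.1 hy).2) (hc v)
    _ = r * Fintype.card V := by simp [mul_comm]

end


end Aux

/-- If a graph `G` with average degree `a = 2|E(G)|/|V(G)|` is
`r`-locally coloured, then some colour class has at least `a²/(2r²)` edges. -/
theorem local_colouring_dense_colour_class {V : Type*} [Fintype V] [DecidableEq V]
    (G : SimpleGraph V) [DecidableRel G.Adj] (c : Sym2 V → ℕ) (r : ℕ)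
    (hc : LocalColouring G c r)
    (a : ℝ) (ha : a = 2 * G.edgeFinset.card / Fintype.card V) :
    ∃ x : ℕ, a ^ 2 / (2 * (r : ℝ) ^ 2) ≤ ({e ∈ G.edgeSet | c e = x}.ncard : ℝ) := by
  have hc' : ∀ v : V, {x : ℕ | ∃ w, G.Adj v w ∧ c s(v, w) = x}.ncard ≤ r := hc
  classical
  set m : ℕ → ℕ := fun x => (G.edgeFinset.filter (fun e => c e = x)).card with hm
  have hncard : ∀ x : ℕ, ({e ∈ G.edgeSet | c e = x}.ncard : ℝ) = (m x : ℝ) := by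
    intro x
    congr 1
    have : {e ∈ G.edgeSet | c e = x} = ↑(G.edgeFinset.filter (fun e => c e = x)) := by
      ext e
      simp [Set.mem_setOf_eq, mem_edgeFinset]
    rw [this, Set.ncard_coe_finset]
  have hseen : ∀ v, (seenBy G c v).card ≤ r := by
    intro v
    have hset : {x : ℕ | ∃ w, G.Adj v w ∧ c s(v, w) = x} = ↑(seenBy G c v) := by
      ext x
      simp [seenBy, mem_neighborFinset]
    have := hc v
    rwa [hset, Set.ncard_coe_finset] at this
  rcases Finset.eq_empty_or_nonempty G.edgeFinset with hE | hE
  · refine ⟨0, ?_⟩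
    rw [ha, hE]
    simp
  -- nonempty case
  obtain ⟨e0, he0⟩ := hE
  have hn : 0 < (Fintype.card V : ℝ) := by
    induction e0 with
    | _ u v => exact_mod_cast Fintype.card_pos_iff.2 ⟨u⟩
  have hr : 0 < r := by
    induction e0 with
    | _ u v =>
      have hadj : G.Adj u v := by rw [mem_edgeFinset, mem_edgeSet] at he0; exact he0
      have : c s(u, v) ∈ seenBy G c u := by
        simp only [seenBy, Finset.mem_image, mem_neighborFinset]
        exact ⟨v, hadj, rfl⟩
      exact lt_of_lt_of_le (Finset.card_pos.2 ⟨_, this⟩) (hseen u)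
  set colours : Finset ℕ := G.edgeFinset.image c with hcol
  have hcolne : colours.Nonempty := ⟨c e0, Finset.mem_image_of_mem c he0⟩
  obtain ⟨x₀, _, hx₀⟩ := Finset.exists_max_image colours m hcolne
  refine ⟨x₀, ?_⟩
  rw [hncard]
  set M : ℝ := (m x₀ : ℝ) with hM
  have hMnn : 0 ≤ M := Nat.cast_nonneg _
  -- sum of class sizes = |E|
  have hsum : (G.edgeFinset.card : ℝ) = ∑ x ∈ colours, (m x : ℝ) := by
    rw [← Nat.cast_sum]
    exact_mod_cast congrArg Nat.cast
      (Finset.card_eq_sum_card_fiberwise (f := c) (s := G.edgeFinset) (t := colours)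
        (fun e he => Finset.mem_image_of_mem c he))
  -- key per-colour bound
  have hkey : ∀ x ∈ colours, Real.sqrt 2 * (m x : ℝ) ≤ Real.sqrt M * (seers G c x).card := by
    intro x hx
    have h1 : Real.sqrt 2 * Real.sqrt (m x) ≤ ((seers G c x).card : ℝ) := by
      have h2 : ((2 * m x : ℕ) : ℝ) ≤ (((seers G c x).card : ℝ)) ^ 2 := by
        exact_mod_cast colour_class_sq_bound G c x
      have := Real.sqrt_le_sqrt h2
      rwa [Nat.cast_mul, Nat.cast_ofNat, Real.sqrt_mul (by norm_num),
        Real.sqrt_sq (Nat.cast_nonneg _)] at this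
    have h3 : (m x : ℝ) ≤ Real.sqrt M * Real.sqrt (m x) := by
      have := Real.sqrt_le_sqrt (show ((m x : ℝ)) ≤ M from Nat.cast_le.2 (hx₀ x hx))
      calc (m x : ℝ) = Real.sqrt (m x) * Real.sqrt (m x) :=
            (Real.mul_self_sqrt (Nat.cast_nonneg _)).symm
        _ ≤ Real.sqrt M * Real.sqrt (m x) :=
            mul_le_mul_of_nonneg_right this (Real.sqrt_nonneg _)
    calc Real.sqrt 2 * (m x : ℝ) ≤ Real.sqrt 2 * (Real.sqrt M * Real.sqrt (m x)) :=
          mul_le_mul_of_nonneg_left h3 (Real.sqrt_nonneg _)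
      _ = Real.sqrt M * (Real.sqrt 2 * Real.sqrt (m x)) := by ring
      _ ≤ Real.sqrt M * ((seers G c x).card : ℝ) :=
          mul_le_mul_of_nonneg_left h1 (Real.sqrt_nonneg _)
  have hEr : Real.sqrt 2 * (G.edgeFinset.card : ℝ) ≤ Real.sqrt M * (r * Fintype.card V) := by
    calc Real.sqrt 2 * (G.edgeFinset.card : ℝ)
        = ∑ x ∈ colours, Real.sqrt 2 * (m x : ℝ) := by rw [hsum, Finset.mul_sum]
      _ ≤ ∑ x ∈ colours, Real.sqrt M * ((seers G c x).card : ℝ) :=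
          Finset.sum_le_sum hkey
      _ = Real.sqrt M * ((∑ x ∈ colours, ((seers G c x).card : ℕ) : ℕ) : ℝ) := by
          rw [← Finset.mul_sum, Nat.cast_sum]
      _ ≤ Real.sqrt M * ((r * Fintype.card V : ℕ) : ℝ) := by
          apply mul_le_mul_of_nonneg_left _ (Real.sqrt_nonneg _)
          exact_mod_cast seers_sum_bound G c r hseen colours
      _ = Real.sqrt M * (r * Fintype.card V) := by push_cast; ring
  -- from a = 2E/n
  have han : a * Fintype.card V = 2 * G.edgeFinset.card := by
    rw [ha]; field_simp
  have ha' : Real.sqrt 2 * a ≤ 2 * (Real.sqrt M * r) := by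
    have h := mul_le_mul_of_nonneg_left hEr (le_of_lt (show (0:ℝ) < 2 by norm_num))
    rw [show (2:ℝ) * (Real.sqrt 2 * (G.edgeFinset.card : ℝ))
        = Real.sqrt 2 * (2 * G.edgeFinset.card) by ring, ← han] at h
    have h2 : Real.sqrt 2 * a * Fintype.card V ≤ 2 * (Real.sqrt M * r) * Fintype.card V := by
      calc Real.sqrt 2 * a * Fintype.card V = Real.sqrt 2 * (a * Fintype.card V) := by ring
        _ ≤ 2 * (Real.sqrt M * (r * Fintype.card V)) := h
        _ = 2 * (Real.sqrt M * r) * Fintype.card V := by ring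
    exact le_of_mul_le_mul_right h2 hn
  have hann : 0 ≤ a := by rw [ha]; positivity
  have hsq : (Real.sqrt 2 * a) ^ 2 ≤ (2 * (Real.sqrt M * r)) ^ 2 := by
    apply pow_le_pow_left₀ (by positivity) ha'
  rw [mul_pow, mul_pow, mul_pow, Real.sq_sqrt (by norm_num : (0:ℝ) ≤ 2),
    Real.sq_sqrt hMnn] at hsq
  rw [div_le_iff₀ (by positivity)]
  nlinarith [hsq]
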